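/- If the total weight Z = ∑_τ w(τ) over all finite planar trees (with weight w(τ) = ∏_v w_{outdeg(v)}) is finite, then Z is the smallest positive solution of z = g(z), where g(x) = ∑_i w_i x^i; equivalently, writing g(x) = 1 + x f(x), Z satisfies f(Z) = 1 - 1/Z. -/

import Mathlib

open scoped ENNReal

/-!
Removing the root identifies a planar tree with the list of its subtrees, and a list with its
length `n` together with an `n`-tuple of trees; summing weights along these bijections gives
`Z = ∑ₙ wₙ Zⁿ = g Z`. The same computation bounds the total weight of the trees of depth at most
`k + 1` by `g` of the total weight of those of depth at most `k`, so by induction and monotonicity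
of `g` every `z ≥ g z` dominates all of them, hence dominates `Z`. Finally `Z = g Z = 1 + f(Z) Z`
can be divided by the finite, nonzero `Z`.
-/

/-- Rooted planar trees: a tree is a root together with an ordered (finite) list of
subtrees. -/
inductive PTree where
  | node : List PTree → PTree

/-- The weight of a planar tree: the product over all vertices `v` of `w_{c(v)}`,
where `c(v)` is the number of children of `v`. -/
noncomputable def PTree.weight (w : ℕ → ℝ≥0∞) : PTree → ℝ≥0∞
  | .node ts => w ts.length * (ts.attach.map fun t => PTree.weight w t.1).prod
decreasing_by
  have := List.sizeOf_lt_of_mem t.2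
  simp only [PTree.node.sizeOf_spec]
  omega

namespace ENNReal

variable {α : Type*}

theorem tsum_fin_pi_prod (h : α → ℝ≥0∞) (n : ℕ) :
    ∑' v : Fin n → α, ∏ i, h (v i) = (∑' a, h a) ^ n := by
  induction n with
  | zero => simp [tsum_fintype]
  | succ n ih =>
    rw [← (Fin.consEquiv fun _ : Fin (n + 1) => α).tsum_eq, ENNReal.tsum_prod']
    simp only [Fin.consEquiv_apply, Fin.prod_univ_succ, Fin.cons_zero, Fin.cons_succ,
      ENNReal.tsum_mul_left, ENNReal.tsum_mul_right, ih, pow_succ']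

theorem tsum_list_length_mul_prod (c : ℕ → ℝ≥0∞) (h : α → ℝ≥0∞) :
    ∑' l : List α, c l.length * (l.map h).prod = ∑' n, c n * (∑' a, h a) ^ n := by
  rw [← List.equivSigmaTuple.symm.tsum_eq, ENNReal.tsum_sigma']
  simp only [List.equivSigmaTuple_symm_apply, List.length_ofFn, List.map_ofFn, List.prod_ofFn,
    Function.comp_def, ENNReal.tsum_mul_left, tsum_fin_pi_prod]

theorem tsum_mul_pow_eq_add (a : ℕ → ℝ≥0∞) (x : ℝ≥0∞) :
    ∑' i, a i * x ^ i = a 0 + (∑' i, a (i + 1) * x ^ i) * x := by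
  rw [tsum_eq_zero_add' ENNReal.summable, pow_zero, mul_one, ← ENNReal.tsum_mul_right]
  simp only [pow_succ, mul_assoc]

theorem eq_one_sub_one_div_of_eq_one_add_mul {x y : ℝ≥0∞} (hx : x ≠ ⊤) (h : x = 1 + y * x) :
    y = 1 - 1 / x := by
  have hx0 : x ≠ 0 := by rintro rfl; simp at h
  refine ENNReal.eq_sub_of_add_eq (by simpa using hx0) ?_
  calc y + 1 / x = (1 + y * x) * x⁻¹ := by
        rw [add_mul, mul_assoc, ENNReal.mul_inv_cancel hx0 hx]; simp [add_comm]
    _ = 1 := by rw [← h, ENNReal.mul_inv_cancel hx0 hx]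

end ENNReal

namespace PTree

def depth : PTree → ℕ
  | .node ts => (ts.attach.map fun t => depth t.1).foldr max 0 + 1
decreasing_by
  have := List.sizeOf_lt_of_mem t.2
  simp only [PTree.node.sizeOf_spec]
  omega

theorem weight_node (w : ℕ → ℝ≥0∞) (ts : List PTree) :
    weight w (.node ts) = w ts.length * (ts.map (weight w)).prod := by
  rw [weight, List.attach_map_val]

theorem depth_node_le_succ_iff (ts : List PTree) (k : ℕ) :
    depth (.node ts) ≤ k + 1 ↔ ∀ t ∈ ts, depth t ≤ k := by
  rw [depth, List.attach_map_val, Nat.add_le_add_iff_right]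
  induction ts with
  | nil => simp
  | cons t ts ih => simp [ih]

def equivList : PTree ≃ List PTree where
  toFun | .node ts => ts
  invFun := .node
  left_inv | .node _ => rfl
  right_inv _ := rfl

theorem tsum_eq_tsum_node (F : PTree → ℝ≥0∞) : ∑' τ, F τ = ∑' ts, F (.node ts) :=
  (equivList.symm.tsum_eq F).symm

theorem tsum_weight_eq (w : ℕ → ℝ≥0∞) :
    ∑' τ, weight w τ = ∑' n, w n * (∑' τ, weight w τ) ^ n := by
  conv_lhs => rw [tsum_eq_tsum_node]
  simp only [weight_node, ENNReal.tsum_list_length_mul_prod]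

noncomputable def weightUpTo (w : ℕ → ℝ≥0∞) (k : ℕ) (τ : PTree) : ℝ≥0∞ :=
  if τ.depth ≤ k then τ.weight w else 0

theorem weightUpTo_zero (w : ℕ → ℝ≥0∞) (τ : PTree) : weightUpTo w 0 τ = 0 := by
  cases τ
  exact if_neg (by rw [depth]; omega)

theorem weightUpTo_succ_node (w : ℕ → ℝ≥0∞) (k : ℕ) (ts : List PTree) :
    weightUpTo w (k + 1) (.node ts) = w ts.length * (ts.map (weightUpTo w k)).prod := by
  by_cases hts : ∀ t ∈ ts, depth t ≤ k
  · rw [weightUpTo, if_pos ((depth_node_le_succ_iff ts k).2 hts), weight_node,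
      List.map_congr_left (f := weightUpTo w k) (g := weight w) fun t ht => if_pos (hts t ht)]
  · obtain ⟨t, ht, hdepth⟩ := not_forall₂.1 hts
    have hzero : (0 : ℝ≥0∞) ∈ ts.map (weightUpTo w k) := List.mem_map.2 ⟨t, ht, if_neg hdepth⟩
    rw [weightUpTo, if_neg (mt (depth_node_le_succ_iff ts k).1 hts),
      List.prod_eq_zero hzero, mul_zero]

theorem tsum_weightUpTo_succ (w : ℕ → ℝ≥0∞) (k : ℕ) :
    ∑' τ, weightUpTo w (k + 1) τ = ∑' n, w n * (∑' τ, weightUpTo w k τ) ^ n := by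
  rw [tsum_eq_tsum_node]
  simp only [weightUpTo_succ_node, ENNReal.tsum_list_length_mul_prod]

theorem tsum_weight_le_of_tsum_mul_pow_le (w : ℕ → ℝ≥0∞) {z : ℝ≥0∞}
    (hz : ∑' n, w n * z ^ n ≤ z) : ∑' τ, weight w τ ≤ z := by
  have hUpTo : ∀ k, ∑' τ, weightUpTo w k τ ≤ z := by
    intro k
    induction k with
    | zero => simp [weightUpTo_zero]
    | succ k ih =>
      rw [tsum_weightUpTo_succ]
      exact le_trans (ENNReal.tsum_le_tsum fun n => by gcongr) hz
  rw [ENNReal.tsum_eq_iSup_sum]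
  refine iSup_le fun s => le_trans ?_ (hUpTo (s.sup depth))
  calc ∑ τ ∈ s, weight w τ = ∑ τ ∈ s, weightUpTo w (s.sup depth) τ :=
        Finset.sum_congr rfl fun τ hτ => (if_pos (Finset.le_sup hτ)).symm
    _ ≤ ∑' τ, weightUpTo w (s.sup depth) τ := ENNReal.sum_le_tsum s

end PTree

theorem stmt9_general (w : ℕ → ℝ≥0∞) (hw0 : w 0 = 1)
    (g f : ℝ≥0∞ → ℝ≥0∞)
    (hg : ∀ x, g x = ∑' i : ℕ, w i * x ^ i)
    (hf : ∀ x, f x = ∑' i : ℕ, w (i + 1) * x ^ i)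
    (Z : ℝ≥0∞) (hZdef : Z = ∑' τ : PTree, PTree.weight w τ) (hZfin : Z < ⊤) :
    (Z = g Z ∧ ∀ z : ℝ≥0∞, 0 < z → z = g z → Z ≤ z) ∧ f Z = 1 - 1 / Z := by
  have hfix : Z = g Z := by
    rw [hg, hZdef]
    exact PTree.tsum_weight_eq w
  have hmin : ∀ z, 0 < z → z = g z → Z ≤ z := fun z _ hz =>
    hZdef ▸ PTree.tsum_weight_le_of_tsum_mul_pow_le w (hg z ▸ hz).ge
  refine ⟨⟨hfix, hmin⟩, ENNReal.eq_one_sub_one_div_of_eq_one_add_mul hZfin.ne ?_⟩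
  rwa [hf, ← hw0, ← ENNReal.tsum_mul_pow_eq_add, ← hg]

/-- If the total weight `Z = ∑_τ w(τ)` over all finite planar trees is finite, then `Z` is
the smallest positive solution of `z = g(z)` where `g(x) = ∑_i w_i x^i`; equivalently,
writing `g(x) = 1 + x f(x)`, `Z` satisfies `f(Z) = 1 - 1/Z`. -/
theorem stmt9 (w : ℕ → ℝ≥0∞) (hw0 : w 0 = 1) (hw2 : ∃ i, 2 ≤ i ∧ 0 < w i)
    (g f : ℝ≥0∞ → ℝ≥0∞)
    (hg : ∀ x, g x = ∑' i : ℕ, w i * x ^ i)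
    (hf : ∀ x, f x = ∑' i : ℕ, w (i + 1) * x ^ i)
    (Z : ℝ≥0∞) (hZdef : Z = ∑' τ : PTree, PTree.weight w τ) (hZfin : Z < ⊤) :
    (Z = g Z ∧ ∀ z : ℝ≥0∞, 0 < z → z = g z → Z ≤ z) ∧ f Z = 1 - 1 / Z :=
  stmt9_general w hw0 g f hg hf Z hZdef hZfin
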